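/- In the ring of formal power series ℤ⟦q⟧, the following identity holds: φ(q)² = g(q⁷,q⁸)·g(q⁶,q⁹) − q·g(q⁴,q¹¹)·g(q³,q¹²) − q²·g(q,q¹⁴)·g(q³,q¹²) − q·g(q⁶,q⁹)·g(q²,q¹³) + q²·g(q⁵,q¹⁰)·g(1,q¹⁵). -/

import Mathlib

/-- `fJacobi a b` is the theta-type series `f(q^a, q^b) = ∑_{j ∈ ℤ} q^{a·j(j−1)/2 + b·j(j+1)/2}`
in `ℤ⟦q⟧`. For each exponent `N`, all integers `j` contributing to the coefficient of `q^N`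
lie in `[-(N+1), N+1]` (assuming `a`, `b` not both zero), so the coefficient is a finite count. -/
noncomputable def fJacobi (a b : ℕ) : PowerSeries ℤ :=
  PowerSeries.mk fun N =>
    ∑ j ∈ Finset.Icc (-(N : ℤ) - 1) ((N : ℤ) + 1),
      if (a : ℤ) * (j * (j - 1) / 2) + (b : ℤ) * (j * (j + 1) / 2) = (N : ℤ) then 1 else 0

/-- `gJacobi a b` is the signed theta series
`g(q^a, q^b) = ∑_{j ∈ ℤ} (−1)^j q^{a·j(j−1)/2 + b·j(j+1)/2}` in `ℤ⟦q⟧`. -/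
noncomputable def gJacobi (a b : ℕ) : PowerSeries ℤ :=
  PowerSeries.mk fun N =>
    ∑ j ∈ Finset.Icc (-(N : ℤ) - 1) ((N : ℤ) + 1),
      if (a : ℤ) * (j * (j - 1) / 2) + (b : ℤ) * (j * (j + 1) / 2) = (N : ℤ)
      then (-1 : ℤ) ^ j.natAbs else 0

/-- `eulerPhi = φ(q) = ∏_{j=1}^∞ (1 − q^j)` in `ℤ⟦q⟧`: the coefficient of `q^N` is the
(stable) coefficient of `q^N` in the partial product `∏_{j=1}^{N+1} (1 − q^j)`. -/
noncomputable def eulerPhi : PowerSeries ℤ :=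
  PowerSeries.mk fun N =>
    PowerSeries.coeff N
      (∏ j ∈ Finset.range (N + 1), (1 - (PowerSeries.X : PowerSeries ℤ) ^ (j + 1)))

/-- `φ(q²) = ∏_{j=1}^∞ (1 − q^{2j})` in `ℤ⟦q⟧`. -/
noncomputable def eulerPhi2 : PowerSeries ℤ :=
  PowerSeries.mk fun N =>
    PowerSeries.coeff N
      (∏ j ∈ Finset.range (N + 1), (1 - (PowerSeries.X : PowerSeries ℤ) ^ (2 * (j + 1))))

/-- `S1 = ∑_{i=0}^∞ q^{2i²} / ∏_{k=1}^{2i}(1−q^k)` in `ℤ⟦q⟧`: the coefficient of `q^N` is the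
(stable) coefficient of `q^N` in the partial sum over `i ≤ N` (terms with `i > N` have lowest
degree `2i² > N`). Each denominator has constant term `1`, hence is inverted via `invOfUnit`. -/
noncomputable def S1 : PowerSeries ℤ :=
  PowerSeries.mk fun N =>
    PowerSeries.coeff N (∑ i ∈ Finset.range (N + 1),
      (PowerSeries.X : PowerSeries ℤ) ^ (2 * i ^ 2) *
        PowerSeries.invOfUnit
          (∏ k ∈ Finset.range (2 * i), (1 - (PowerSeries.X : PowerSeries ℤ) ^ (k + 1))) 1)

/-- `S2 = ∑_{i=0}^∞ q^{2i²+2i} / ∏_{k=1}^{2i+1}(1−q^k)` in `ℤ⟦q⟧`. -/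
noncomputable def S2 : PowerSeries ℤ :=
  PowerSeries.mk fun N =>
    PowerSeries.coeff N (∑ i ∈ Finset.range (N + 1),
      (PowerSeries.X : PowerSeries ℤ) ^ (2 * i ^ 2 + 2 * i) *
        PowerSeries.invOfUnit
          (∏ k ∈ Finset.range (2 * i + 1), (1 - (PowerSeries.X : PowerSeries ℤ) ^ (k + 1))) 1)

/-- `pDO m` is the number of partitions of `m` into distinct odd parts. -/
noncomputable def pDO (m : ℕ) : ℕ :=
  Nat.card {p : m.Partition // p.parts.Nodup ∧ ∀ i ∈ p.parts, Odd i}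

/-- `aCount k` is the number of partitions `(λ₁^{f₁},…,λ_j^{f_j})` of `3k` (encoded as the list
`[(λ₁,f₁),…,(λ_j,f_j)]` with `λ₁ > ⋯ > λ_j > 0`) with all multiplicities `1 ≤ fᵢ ≤ 2`,
`f₁ ≡ λ₁ (mod 3)` and `fᵢ + fᵢ₊₁ + λᵢ − λᵢ₊₁ ≡ 0 (mod 3)` for `1 ≤ i < j`. -/
noncomputable def aCount (k : ℕ) : ℕ :=
  Nat.card {L : List (ℕ × ℕ) //
    (L.map fun p => p.2 * p.1).sum = 3 * k ∧
    (∀ p ∈ L, 0 < p.1 ∧ 1 ≤ p.2 ∧ p.2 ≤ 2) ∧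
    List.Chain' (fun p q => q.1 < p.1 ∧ ((p.2 : ℤ) + q.2 + p.1 - q.1) % 3 = 0) L ∧
    ∀ p ∈ L.head?, (p.2 : ℤ) % 3 = (p.1 : ℤ) % 3}

/-- `bCount k` : same as `aCount` but for partitions of `3k − 2`. -/
noncomputable def bCount (k : ℕ) : ℕ :=
  Nat.card {L : List (ℕ × ℕ) //
    (L.map fun p => p.2 * p.1).sum = 3 * k - 2 ∧
    (∀ p ∈ L, 0 < p.1 ∧ 1 ≤ p.2 ∧ p.2 ≤ 2) ∧
    List.Chain' (fun p q => q.1 < p.1 ∧ ((p.2 : ℤ) + q.2 + p.1 - q.1) % 3 = 0) L ∧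
    ∀ p ∈ L.head?, (p.2 : ℤ) % 3 = (p.1 : ℤ) % 3}

/-- Number of partitions of `n` all of whose parts have residue mod 15 outside `{r₁, r₂, r₃}`. -/
noncomputable def pAvoid (n : ℕ) (r₁ r₂ r₃ : ℕ) : ℕ :=
  Nat.card {p : n.Partition // ∀ i ∈ p.parts, i % 15 ≠ r₁ ∧ i % 15 ≠ r₂ ∧ i % 15 ≠ r₃}

/-!
Euler's pentagonal number theorem gives `φ(q) = g(q, q²) = ∑_{j ∈ ℤ} (-1)^j q^{(3j² + j)/2}`, so
`φ(q)²` is the signed generating series of pairs `(j, k) ∈ ℤ²` with exponent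
`(3j² + j + 3k² + k)/2`. Sorting the pairs by `2j - k mod 5`, each class is the image of an affine
map `(u, v) ↦ (j, k)` with `j² + k² = 5(u² + v²) + (linear terms)`, which turns the exponent into
`t + (15u² + αu)/2 + (15v² + βv)/2` and the sign into `±(-1)^(u+v)`. Each class therefore
contributes `± q^t g(q^a, q^{15-a}) g(q^c, q^{15-c})`.
-/

open PowerSeries

theorem Int.mul_sub_one_nonneg (j : ℤ) : 0 ≤ j * (j - 1) := by
  rcases le_or_gt j 0 with h | h
  · exact mul_nonneg_of_nonpos_of_nonpos h (by omega)
  · exact mul_nonneg h.le (by omega)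

theorem Int.mul_add_one_nonneg (j : ℤ) : 0 ≤ j * (j + 1) := by
  simpa [mul_comm] using Int.mul_sub_one_nonneg (j + 1)

theorem Int.negOnePow_eq_neg_of_odd_sub {m n : ℤ} (h : Odd (m - n)) :
    m.negOnePow = -n.negOnePow := by
  rw [show m = m - n + n by ring, Int.negOnePow_add, Int.negOnePow_odd _ h, neg_one_mul]

section WeightedSeries

variable {R ι κ : Type*} [CommRing R]

/-- The series `∑ᵢ w i • X ^ (e i)`. Its coefficients are `finsum`s, which are `0` on infinite
supports, so the lemmas below assume that the sublevel sets of `e` are finite. -/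
noncomputable def weightedSeries (e : ι → ℕ) (w : ι → R) : R⟦X⟧ :=
  mk fun n => ∑ᶠ i, if e i = n then w i else 0

variable {e : ι → ℕ} {w : ι → R}

theorem coeff_weightedSeries_eq_sum {n : ℕ} (s : Finset ι) (hs : ∀ i, e i = n → i ∈ s) :
    coeff n (weightedSeries e w) = ∑ i ∈ s, if e i = n then w i else 0 := by
  rw [weightedSeries, coeff_mk]
  refine finsum_eq_sum_of_support_subset (fun i => if e i = n then w i else 0) fun i hi => hs i ?_
  by_contra h
  exact hi (if_neg h)

theorem coeff_weightedSeries_of_injective (he : e.Injective) (i : ι) :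
    coeff (e i) (weightedSeries e w) = w i := by
  rw [weightedSeries, coeff_mk, finsum_eq_single _ i fun j hj => if_neg (he.ne hj), if_pos rfl]

theorem coeff_weightedSeries_of_notMem_range {n : ℕ} (hn : n ∉ Set.range e) :
    coeff n (weightedSeries e w) = 0 := by
  rw [weightedSeries, coeff_mk]
  exact finsum_eq_zero_of_forall_eq_zero fun i => if_neg fun h => hn ⟨i, h⟩

theorem weightedSeries_comp_equiv (σ : κ ≃ ι) :
    weightedSeries (e ∘ σ) (w ∘ σ) = weightedSeries e w := by
  ext n
  rw [weightedSeries, weightedSeries, coeff_mk, coeff_mk]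
  exact finsum_comp_equiv σ (f := fun i => if e i = n then w i else 0)

theorem weightedSeries_neg : weightedSeries e (-w) = -weightedSeries e w := by
  ext n
  rw [weightedSeries, weightedSeries, coeff_mk, map_neg, coeff_mk, ← finsum_neg_distrib]
  exact finsum_congr fun i => by split_ifs <;> simp

theorem X_pow_mul_weightedSeries (t : ℕ) :
    X ^ t * weightedSeries e w = weightedSeries (fun i => t + e i) w := by
  ext n
  rw [coeff_X_pow_mul', weightedSeries, weightedSeries, coeff_mk, coeff_mk]
  split_ifs with ht
  · exact finsum_congr fun i => if_congr (by omega) rfl rfl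
  · exact (finsum_eq_zero_of_forall_eq_zero fun i => if_neg (by omega)).symm

theorem finite_setOf_add_le {e' : κ → ℕ} (he : ∀ n, {i | e i ≤ n}.Finite)
    (he' : ∀ n, {i | e' i ≤ n}.Finite) (n : ℕ) :
    {p : ι × κ | e p.1 + e' p.2 ≤ n}.Finite :=
  ((he n).prod (he' n)).subset fun p hp => by
    simp only [Set.mem_ofPred_eq, Set.mem_prod] at hp ⊢
    omega

open Finset in
theorem weightedSeries_mul {e' : κ → ℕ} {w' : κ → R} (he : ∀ n, {i | e i ≤ n}.Finite)
    (he' : ∀ n, {i | e' i ≤ n}.Finite) :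
    weightedSeries e w * weightedSeries e' w' =
      weightedSeries (fun p : ι × κ => e p.1 + e' p.2) (fun p => w p.1 * w' p.2) := by
  classical
  ext n
  set s := (he n).toFinset
  set s' := (he' n).toFinset
  rw [coeff_weightedSeries_eq_sum (s ×ˢ s') fun p hp => by
    simp only [mem_product, s, s', Set.Finite.mem_toFinset, Set.mem_ofPred_eq]; omega]
  rw [coeff_mul, sum_product]
  have hcoeff : ∀ x ∈ antidiagonal n,
      coeff x.1 (weightedSeries e w) * coeff x.2 (weightedSeries e' w') =
        ∑ i ∈ s, ∑ j ∈ s', if (e i, e' j) = x then w i * w' j else 0 := by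
    intro x hx
    rw [HasAntidiagonal.mem_antidiagonal] at hx
    rw [coeff_weightedSeries_eq_sum s fun i hi => by
        simp only [s, Set.Finite.mem_toFinset, Set.mem_ofPred_eq]; omega,
      coeff_weightedSeries_eq_sum s' fun j hj => by
        simp only [s', Set.Finite.mem_toFinset, Set.mem_ofPred_eq]; omega, sum_mul_sum]
    refine sum_congr rfl fun i _ => sum_congr rfl fun j _ => ?_
    rw [ite_zero_mul_ite_zero]
    exact if_congr (by rw [Prod.ext_iff]) rfl rfl
  rw [sum_congr rfl hcoeff, sum_comm]
  refine sum_congr rfl fun i _ => ?_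
  rw [sum_comm]
  refine sum_congr rfl fun j _ => ?_
  rw [sum_ite_eq]
  exact if_congr HasAntidiagonal.mem_antidiagonal rfl rfl

theorem weightedSeries_eq_sum_fintype [Fintype κ] {e : κ × ι → ℕ} {w : κ × ι → R}
    (he : ∀ n, {p | e p ≤ n}.Finite) :
    weightedSeries e w = ∑ r, weightedSeries (fun i => e (r, i)) (fun i => w (r, i)) := by
  classical
  ext n
  set t := (he n).toFinset.image Prod.snd
  have hmem : ∀ p, e p = n → p.2 ∈ t := fun p hp =>
    Finset.mem_image_of_mem _ (by simp [hp])
  rw [coeff_weightedSeries_eq_sum (Finset.univ ×ˢ t) fun p hp => by simp [hmem p hp],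
    Finset.sum_product, map_sum]
  exact Finset.sum_congr rfl fun r _ =>
    (coeff_weightedSeries_eq_sum t fun i hi => hmem (r, i) hi).symm

end WeightedSeries

theorem coeff_mul_prod_one_sub_X_pow {R : Type*} [CommRing R] (f : R⟦X⟧) {N : ℕ}
    (s : Finset ℕ) (hs : ∀ m ∈ s, N ≤ m) :
    coeff N (f * ∏ m ∈ s, (1 - X ^ (m + 1))) = coeff N f := by
  induction s using Finset.induction_on with
  | empty => rw [Finset.prod_empty, mul_one]
  | insert m s hm ih =>
    have hmN := hs m (Finset.mem_insert_self m s)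
    rw [Finset.prod_insert hm, mul_left_comm, sub_mul, one_mul, map_sub, coeff_X_pow_mul',
      if_neg (by omega), sub_zero, ih fun m' hm' => hs m' (Finset.mem_insert_of_mem hm')]

theorem eulerPhi_eq_pentagonalSeries : eulerPhi = pentagonalSeries ℤ := by
  ext N
  obtain ⟨s, hs⟩ := Filter.eventually_atTop.mp (coeff_prod_one_sub_X_pow_eventually_eq ℤ N)
  have hsub : Finset.range (N + 1) ⊆ s ∪ Finset.range (N + 1) := Finset.subset_union_right
  rw [eulerPhi, coeff_mk, ← hs _ Finset.subset_union_left, ← Finset.prod_sdiff hsub, mul_comm,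
    coeff_mul_prod_one_sub_X_pow]
  intro m hm
  rw [Finset.mem_sdiff, Finset.mem_range] at hm
  omega

def gJacobiExp (a b : ℕ) (j : ℤ) : ℕ :=
  ((a : ℤ) * (j * (j - 1) / 2) + (b : ℤ) * (j * (j + 1) / 2)).toNat

section gJacobiExp

variable (a b : ℕ) (j : ℤ)

theorem natCast_gJacobiExp :
    (gJacobiExp a b j : ℤ) = (a : ℤ) * (j * (j - 1) / 2) + (b : ℤ) * (j * (j + 1) / 2) := by
  have hpred : 0 ≤ j * (j - 1) / 2 := Int.ediv_nonneg (Int.mul_sub_one_nonneg j) zero_le_two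
  have hsucc : 0 ≤ j * (j + 1) / 2 := Int.ediv_nonneg (Int.mul_add_one_nonneg j) zero_le_two
  exact Int.toNat_of_nonneg (by positivity)

theorem two_mul_natCast_gJacobiExp :
    2 * (gJacobiExp a b j : ℤ) = a * (j * (j - 1)) + b * (j * (j + 1)) := by
  have hpred := Int.two_mul_ediv_two_of_even (Int.even_mul_pred_self j)
  have hsucc := Int.two_mul_ediv_two_of_even (Int.even_mul_succ_self j)
  rw [natCast_gJacobiExp]
  linear_combination (a : ℤ) * hpred + (b : ℤ) * hsucc

variable {a b}

theorem natAbs_le_gJacobiExp_add_one (hab : 0 < a + b) : j.natAbs ≤ gJacobiExp a b j + 1 := by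
  have h2 := two_mul_natCast_gJacobiExp a b j
  have hab' : (1 : ℤ) ≤ a + b := by exact_mod_cast hab
  have ha : (0 : ℤ) ≤ a := by positivity
  have hb : (0 : ℤ) ≤ b := by positivity
  zify
  rcases le_or_gt 0 j with hj | hj
  · rw [abs_of_nonneg hj]
    nlinarith [mul_nonneg hb (show (0 : ℤ) ≤ 2 * j by omega),
      mul_nonneg (show (0 : ℤ) ≤ a + b - 1 by omega) (Int.mul_sub_one_nonneg j)]
  · rw [abs_of_neg hj]
    nlinarith [mul_nonneg ha (show (0 : ℤ) ≤ -2 * j by omega),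
      mul_nonneg (show (0 : ℤ) ≤ a + b - 1 by omega) (Int.mul_add_one_nonneg j)]

theorem finite_setOf_gJacobiExp_le (hab : 0 < a + b) (n : ℕ) :
    {j | gJacobiExp a b j ≤ n}.Finite :=
  (Set.finite_Icc (-(n : ℤ) - 1) (n + 1)).subset fun j hj => by
    have := natAbs_le_gJacobiExp_add_one j hab
    simp only [Set.mem_ofPred_eq] at hj
    simp only [Set.mem_Icc]
    omega

end gJacobiExp

theorem gJacobiExp_add_gJacobiExp_eq {a b c d a' b' c' d' t : ℕ} {j k u v : ℤ}
    (h : (a : ℤ) * (j * (j - 1)) + b * (j * (j + 1)) + (c * (k * (k - 1)) + d * (k * (k + 1))) =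
      2 * t + (a' * (u * (u - 1)) + b' * (u * (u + 1)) +
        (c' * (v * (v - 1)) + d' * (v * (v + 1))))) :
    gJacobiExp a b j + gJacobiExp c d k = t + (gJacobiExp a' b' u + gJacobiExp c' d' v) := by
  have hj := two_mul_natCast_gJacobiExp a b j
  have hk := two_mul_natCast_gJacobiExp c d k
  have hu := two_mul_natCast_gJacobiExp a' b' u
  have hv := two_mul_natCast_gJacobiExp c' d' v
  zify
  linarith

theorem gJacobi_eq_weightedSeries {a b : ℕ} (hab : 0 < a + b) :
    gJacobi a b = weightedSeries (gJacobiExp a b) fun j => (j.negOnePow : ℤ) := by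
  ext N
  rw [coeff_weightedSeries_eq_sum (Finset.Icc (-(N : ℤ) - 1) (N + 1)) fun j hj => ?_, gJacobi,
    coeff_mk]
  · refine Finset.sum_congr rfl fun j _ => if_congr ?_ (Int.coe_negOnePow ℤ j).symm rfl
    rw [← natCast_gJacobiExp, Nat.cast_inj]
  · have := natAbs_le_gJacobiExp_add_one j hab
    rw [Finset.mem_Icc]
    omega

theorem pentagonalSeries_eq_gJacobi : pentagonalSeries ℤ = gJacobi 1 2 := by
  have hexp : gJacobiExp 1 2 ∘ Equiv.neg ℤ = pentagonal := by
    funext k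
    have h2 : 2 * (gJacobiExp 1 2 (-k) : ℤ) = 2 * pentagonal k := by
      rw [two_mul_natCast_gJacobiExp, two_mul_natCast_pentagonal]
      push_cast
      ring
    exact_mod_cast mul_left_cancel₀ two_ne_zero h2
  rw [gJacobi_eq_weightedSeries (by norm_num), ← weightedSeries_comp_equiv (Equiv.neg ℤ), hexp]
  ext N
  by_cases hN : N ∈ Set.range pentagonal
  · obtain ⟨k, rfl⟩ := hN
    rw [coeff_pentagonalSeries_pentagonal, coeff_weightedSeries_of_injective pentagonal_injective,
      Function.comp_apply, Equiv.neg_apply, Int.negOnePow_neg, Int.cast_id]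
  · rw [coeff_pentagonalSeries_eq_zero ℤ hN, coeff_weightedSeries_of_notMem_range hN]

theorem gJacobi_mul_gJacobi {a b c d : ℕ} (hab : 0 < a + b) (hcd : 0 < c + d) :
    gJacobi a b * gJacobi c d =
      weightedSeries (fun p : ℤ × ℤ => gJacobiExp a b p.1 + gJacobiExp c d p.2)
        fun p => ((p.1 + p.2).negOnePow : ℤ) := by
  rw [gJacobi_eq_weightedSeries hab, gJacobi_eq_weightedSeries hcd,
    weightedSeries_mul (finite_setOf_gJacobiExp_le hab) (finite_setOf_gJacobiExp_le hcd)]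
  simp only [Int.negOnePow_add, Units.val_mul]

theorem X_pow_mul_gJacobi_mul_gJacobi {a b c d : ℕ} (hab : 0 < a + b) (hcd : 0 < c + d)
    (t : ℕ) :
    X ^ t * (gJacobi a b * gJacobi c d) =
      weightedSeries (fun p : ℤ × ℤ => t + (gJacobiExp a b p.1 + gJacobiExp c d p.2))
        fun p => ((p.1 + p.2).negOnePow : ℤ) := by
  rw [gJacobi_mul_gJacobi hab hcd, X_pow_mul_weightedSeries]

/-- The `r`-th branch parametrises the pairs `(j, k)` with `2j - k ≡ r (mod 5)`. -/
def dissectionMod5 : Fin 5 × (ℤ × ℤ) → ℤ × ℤ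
  | (0, u, v) => (v + 2 * u, 2 * v - u)
  | (1, u, v) => (2 * u - v, -u - 2 * v - 1)
  | (2, u, v) => (v + 2 * u + 1, 2 * v - u)
  | (3, u, v) => (-u - 2 * v - 1, -2 * u + v)
  | (4, u, v) => (-v - 2 * u - 1, -2 * v + u - 1)

theorem dissectionMod5_bijective : dissectionMod5.Bijective := by
  constructor
  · rintro ⟨r, u, v⟩ ⟨r', u', v'⟩ h
    fin_cases r <;> fin_cases r' <;>
      simp only [dissectionMod5, Prod.ext_iff, Fin.zero_eta, Fin.mk_one, Fin.reduceFinMk,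
        Fin.reduceEq, Fin.isValue, true_and, false_and] at h ⊢ <;>
      omega
  · rintro ⟨j, k⟩
    have : (2 * j - k) % 5 = 0 ∨ (2 * j - k) % 5 = 1 ∨ (2 * j - k) % 5 = 2 ∨
        (2 * j - k) % 5 = 3 ∨ (2 * j - k) % 5 = 4 := by omega
    rcases this with h | h | h | h | h
    · exact ⟨(0, (2 * j - k) / 5, (j + 2 * k) / 5), by
        simp only [dissectionMod5, Prod.mk.injEq]; omega⟩
    · exact ⟨(1, (2 * j - k - 1) / 5, (-j - 2 * k - 2) / 5), by
        simp only [dissectionMod5, Prod.mk.injEq]; omega⟩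
    · exact ⟨(2, (2 * j - k - 2) / 5, (j + 2 * k - 1) / 5), by
        simp only [dissectionMod5, Prod.mk.injEq]; omega⟩
    · exact ⟨(3, (-j - 2 * k - 1) / 5, (-2 * j + k - 2) / 5), by
        simp only [dissectionMod5, Prod.mk.injEq]; omega⟩
    · exact ⟨(4, (-2 * j + k - 1) / 5, (-j - 2 * k - 3) / 5), by
        simp only [dissectionMod5, Prod.mk.injEq]; omega⟩

theorem gJacobi_one_two_sq_eq_sum_dissectionMod5 :
    gJacobi 1 2 ^ 2 = ∑ r, weightedSeries
      (fun q => gJacobiExp 1 2 (dissectionMod5 (r, q)).1 + gJacobiExp 1 2 (dissectionMod5 (r, q)).2)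
      fun q => (((dissectionMod5 (r, q)).1 + (dissectionMod5 (r, q)).2).negOnePow : ℤ) := by
  have hfin := finite_setOf_add_le (finite_setOf_gJacobiExp_le (a := 1) (b := 2) (by norm_num))
    (finite_setOf_gJacobiExp_le (a := 1) (b := 2) (by norm_num))
  rw [sq, gJacobi_mul_gJacobi (by norm_num) (by norm_num),
    ← weightedSeries_comp_equiv (Equiv.ofBijective _ dissectionMod5_bijective),
    weightedSeries_eq_sum_fintype]
  · rfl
  · exact fun n => (hfin n).preimage (f := dissectionMod5) dissectionMod5_bijective.injective.injOn

theorem gJacobi_one_two_sq :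
    gJacobi 1 2 ^ 2 =
      gJacobi 7 8 * gJacobi 6 9 - X * gJacobi 4 11 * gJacobi 3 12 -
        X ^ 2 * gJacobi 1 14 * gJacobi 3 12 - X * gJacobi 6 9 * gJacobi 2 13 +
        X ^ 2 * gJacobi 5 10 * gJacobi 0 15 := by
  calc gJacobi 1 2 ^ 2
      = X ^ 0 * (gJacobi 7 8 * gJacobi 6 9) + -(X ^ 1 * (gJacobi 4 11 * gJacobi 3 12)) +
          -(X ^ 2 * (gJacobi 1 14 * gJacobi 3 12)) + -(X ^ 1 * (gJacobi 6 9 * gJacobi 2 13)) +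
          X ^ 2 * (gJacobi 5 10 * gJacobi 0 15) := by
        rw [gJacobi_one_two_sq_eq_sum_dissectionMod5, Fin.sum_univ_five]
        congr 4 <;> rw [X_pow_mul_gJacobi_mul_gJacobi (by norm_num) (by norm_num)] <;>
          try rw [← weightedSeries_neg]
        all_goals
          congr 1 <;> funext ⟨u, v⟩ <;> simp only [dissectionMod5, Pi.neg_apply]
          · exact gJacobiExp_add_gJacobiExp_eq (by push_cast; ring)
          · first
            | exact congrArg _ ((Int.negOnePow_eq_iff _ _).mpr (Int.even_iff.mpr (by omega)))
            | rw [Int.negOnePow_eq_neg_of_odd_sub (n := u + v), Units.val_neg]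
              exact Int.odd_iff.mpr (by omega)
    _ = _ := by ring

/-- `φ(q)² = g(q⁷,q⁸)g(q⁶,q⁹) − q·g(q⁴,q¹¹)g(q³,q¹²) − q²·g(q,q¹⁴)g(q³,q¹²) − q·g(q⁶,q⁹)g(q²,q¹³) + q²·g(q⁵,q¹⁰)g(1,q¹⁵)`. -/
theorem stmt6 :
    eulerPhi ^ 2 =
      gJacobi 7 8 * gJacobi 6 9 -
        (PowerSeries.X : PowerSeries ℤ) * gJacobi 4 11 * gJacobi 3 12 -
        (PowerSeries.X : PowerSeries ℤ) ^ 2 * gJacobi 1 14 * gJacobi 3 12 -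
        (PowerSeries.X : PowerSeries ℤ) * gJacobi 6 9 * gJacobi 2 13 +
        (PowerSeries.X : PowerSeries ℤ) ^ 2 * gJacobi 5 10 * gJacobi 0 15 := by
  rw [eulerPhi_eq_pentagonalSeries, pentagonalSeries_eq_gJacobi, gJacobi_one_two_sq]
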